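/- arXiv:2304.02558 — 5 statements merged into one kernel-verified Lean document; each statement's English description precedes it below -/
import Mathlib

section
/- Let M be a matroid on a finite ground set, and let I and J be independent sets of M such that for every element e of I, the set J ∪ {e} is dependent (hence e ∉ J and the fundamental circuit C_J(e), i.e. the unique circuit contained in J ∪ {e}, exists). Then for every subset I' ⊆ I, the set ⋃_{e ∈ I'} (C_J(e) \ {e}) ⊆ J has at least |I'| elements. -/
/-!
An element `e` of a circuit `C` is spanned by `C \ {e}`, and a circuit inside `J ∪ {e}` with `J`
independent must contain `e`. Hence the independent set `I'` lies in the closure of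
`⋃ e ∈ I', C e \ {e}`, so `|I'|` is at most the rank of that union, which is at most its size.
-/

/-- A circuit of a matroid: an inclusion-wise minimal dependent set. -/
def Matroid.IsCircuit' {α : Type*} (M : Matroid α) (C : Set α) : Prop :=
  M.Dep C ∧ ∀ D ⊂ C, ¬ M.Dep D

open Set

namespace Matroid

variable {α : Type*} {M : Matroid α} {C I J X : Set α} {e : α}

lemma IsCircuit'.isCircuit (hC : M.IsCircuit' C) : M.IsCircuit C :=
  isCircuit_iff_forall_ssubset.2
    ⟨hC.1, fun D hDC ↦ (not_dep_iff (hDC.subset.trans hC.1.subset_ground)).1 (hC.2 D hDC)⟩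

lemma IsCircuit.mem_of_subset_insert_of_indep (hC : M.IsCircuit C) (hCJ : C ⊆ insert e J)
    (hJ : M.Indep J) : e ∈ C := by
  by_contra heC
  exact hC.dep.not_indep (hJ.subset ((subset_insert_iff_of_notMem heC).1 hCJ))

lemma Indep.encard_le_encard_of_subset_closure (hI : M.Indep I) (hIX : I ⊆ M.closure X) :
    I.encard ≤ X.encard :=
  calc I.encard ≤ M.eRk (M.closure X) := hI.encard_le_eRk_of_subset hIX
    _ = M.eRk X := M.eRk_closure_eq X
    _ ≤ X.encard := M.eRk_le_encard X

lemma Indep.ncard_le_ncard_of_subset_closure (hI : M.Indep I) (hX : X.Finite)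
    (hIX : I ⊆ M.closure X) : I.ncard ≤ X.ncard :=
  ENat.toNat_le_toNat (hI.encard_le_encard_of_subset_closure hIX) hX.encard_lt_top.ne

end Matroid

theorem fundamental_circuits_union_lower_bound_general {α : Type*} (M : Matroid α)
    (hfin : M.E.Finite) (I J : Set α) (hI : M.Indep I) (hJ : M.Indep J)
    (C : α → Set α)
    (hC : ∀ e ∈ I, M.IsCircuit' (C e) ∧ C e ⊆ insert e J) :
    ∀ I' ⊆ I, I'.ncard ≤ (⋃ e ∈ I', (C e \ {e})).ncard := by
  intro I' hI'I
  have hUE : (⋃ e ∈ I', (C e \ {e})) ⊆ M.E :=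
    iUnion₂_subset fun e he ↦ sdiff_subset.trans (hC e (hI'I he)).1.1.subset_ground
  refine (hI.subset hI'I).ncard_le_ncard_of_subset_closure (hfin.subset hUE) fun e he ↦ ?_
  obtain ⟨hCe, hCeJ⟩ := hC e (hI'I he)
  have heC : e ∈ C e := hCe.isCircuit.mem_of_subset_insert_of_indep hCeJ hJ
  exact M.closure_subset_closure (subset_iUnion₂ (s := fun e _ ↦ C e \ {e}) e he)
    (hCe.isCircuit.mem_closure_sdiff_singleton_of_mem heC)

/-- Let `M` be a matroid on a finite ground set, `I, J` independent sets
such that `J + e` is dependent for every `e ∈ I`, and let `C e` be the fundamental circuit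
of `e` in `J` (the unique circuit contained in `J ∪ {e}`). Then for every `I' ⊆ I`, the set
`⋃ e ∈ I', C e \ {e}` has at least `|I'|` elements. -/
theorem fundamental_circuits_union_lower_bound {α : Type*} (M : Matroid α)
    (hfin : M.E.Finite) (I J : Set α) (hI : M.Indep I) (hJ : M.Indep J)
    (hdep : ∀ e ∈ I, M.Dep (insert e J))
    (C : α → Set α)
    (hC : ∀ e ∈ I, M.IsCircuit' (C e) ∧ C e ⊆ insert e J) :
    ∀ I' ⊆ I, I'.ncard ≤ (⋃ e ∈ I', (C e \ {e})).ncard :=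
  fundamental_circuits_union_lower_bound_general M hfin I J hI hJ C hC
end

section
/- Let G = (U, W; E) be a finite bipartite graph possibly with parallel edges, and let M and N be matchings in G with 2|N| > 3|M|. Then either (a) there exists an edge e ∈ N both of whose endpoints are uncovered by M, or (b) there exist an edge e = (u1, w2) ∈ M and two distinct edges f = (u1, w1) ∈ N and g = (u2, w2) ∈ N such that f shares its U-endpoint u1 with e, g shares its W-endpoint w2 with e, and the vertices w1 and u2 are uncovered by M. -/
/-- `M` is a matching in the bipartite (multi)graph with `U`-endpoint map `eu` and
`W`-endpoint map `ew`: every vertex is incident to at most one edge of `M`. -/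
def IsMatching {U W E : Type*} (eu : E → U) (ew : E → W) (M : Finset E) : Prop :=
  ∀ e ∈ M, ∀ f ∈ M, e ≠ f → eu e ≠ eu f ∧ ew e ≠ ew f

open Classical in
lemma covered_card_aux {E V : Type*} (ev : E → V) (M N : Finset E)
    (hN : ∀ e ∈ N, ∀ f ∈ N, e ≠ f → ev e ≠ ev f) :
    (N.filter fun f => ∃ m ∈ M, ev m = ev f).card = (N.image ev ∩ M.image ev).card := by
  classical
  have himg : (N.filter fun f => ∃ m ∈ M, ev m = ev f).image ev = N.image ev ∩ M.image ev := by
    ext v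
    simp only [Finset.mem_image, Finset.mem_inter, Finset.mem_filter]
    constructor
    · rintro ⟨f, ⟨hfN, m, hmM, hme⟩, rfl⟩
      exact ⟨⟨f, hfN, rfl⟩, ⟨m, hmM, hme⟩⟩
    · rintro ⟨⟨f, hfN, rfl⟩, m, hmM, hme⟩
      exact ⟨f, ⟨hfN, m, hmM, hme⟩, rfl⟩
  rw [← himg]
  refine (Finset.card_image_of_injOn ?_).symm
  intro a ha b hb hab
  by_contra hne
  exact hN a (Finset.mem_of_mem_filter a ha) b (Finset.mem_of_mem_filter b hb) hne hab

/-- If `M`, `N` are matchings of a finite bipartite multigraph with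
`2|N| > 3|M|`, then either some edge of `N` has both endpoints uncovered by `M`, or there
are `e = (u₁,w₂) ∈ M` and distinct `f = (u₁,w₁), g = (u₂,w₂) ∈ N` with `w₁` and `u₂`
uncovered by `M`. -/
theorem short_augmenting_structure {U W E : Type*} [Fintype U] [Fintype W] [Fintype E]
    (eu : E → U) (ew : E → W) (M N : Finset E)
    (hM : IsMatching eu ew M) (hN : IsMatching eu ew N)
    (hcard : 3 * M.card < 2 * N.card) :
    (∃ e ∈ N, (∀ f ∈ M, eu f ≠ eu e) ∧ (∀ f ∈ M, ew f ≠ ew e)) ∨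
    (∃ e ∈ M, ∃ f ∈ N, ∃ g ∈ N, f ≠ g ∧ eu f = eu e ∧ ew g = ew e ∧
      (∀ h ∈ M, ew h ≠ ew f) ∧ (∀ h ∈ M, eu h ≠ eu g)) := by
  classical
  by_contra hcon
  push_neg at hcon
  obtain ⟨ha, hb⟩ := hcon
  have hMu : ∀ e ∈ M, ∀ f ∈ M, e ≠ f → eu e ≠ eu f := fun e he f hf h => (hM e he f hf h).1
  have hMw : ∀ e ∈ M, ∀ f ∈ M, e ≠ f → ew e ≠ ew f := fun e he f hf h => (hM e he f hf h).2
  have hNu : ∀ e ∈ N, ∀ f ∈ N, e ≠ f → eu e ≠ eu f := fun e he f hf h => (hN e he f hf h).1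
  have hNw : ∀ e ∈ N, ∀ f ∈ N, e ≠ f → ew e ≠ ew f := fun e he f hf h => (hN e he f hf h).2
  set NU := N.filter (fun f => ∃ m ∈ M, eu m = eu f) with hNU
  set NW := N.filter (fun f => ∃ m ∈ M, ew m = ew f) with hNW
  set MU := M.filter (fun m => ∃ f ∈ N, eu f = eu m) with hMU
  set MW := M.filter (fun m => ∃ f ∈ N, ew f = ew m) with hMW
  set T2 := NU ∩ NW with hT2
  set D := MU ∩ MW with hD
  -- N is covered: every edge of N touches M
  have hUnion : NU ∪ NW = N := by
    apply Finset.Subset.antisymm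
    · exact Finset.union_subset (Finset.filter_subset _ _) (Finset.filter_subset _ _)
    · intro f hf
      rcases Classical.em (∃ m ∈ M, eu m = eu f) with h | h
      · exact Finset.mem_union_left _ (Finset.mem_filter.2 ⟨hf, h⟩)
      · have h' : ∀ m ∈ M, eu m ≠ eu f := by push_neg at h; exact h
        have := ha f hf h'
        exact Finset.mem_union_right _ (Finset.mem_filter.2 ⟨hf, this⟩)
  -- card equalities between the two sides
  have hcu : NU.card = MU.card := by
    rw [hNU, hMU, covered_card_aux eu M N hNu, covered_card_aux eu N M hMu, Finset.inter_comm]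
  have hcw : NW.card = MW.card := by
    rw [hNW, hMW, covered_card_aux ew M N hNw, covered_card_aux ew N M hMw, Finset.inter_comm]
  have hNsum : NU.card + NW.card = N.card + T2.card := by
    rw [hT2, ← Finset.card_union_add_card_inter, hUnion]
  have hMsum : MU.card + MW.card ≤ M.card + D.card := by
    rw [hD, ← Finset.card_union_add_card_inter]
    have : MU ∪ MW ⊆ M :=
      Finset.union_subset (Finset.filter_subset _ _) (Finset.filter_subset _ _)
    exact Nat.add_le_add_right (Finset.card_le_card this) _
  have hMU_le : MU.card ≤ M.card := Finset.card_le_card (Finset.filter_subset _ _)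
  have hMW_le : MW.card ≤ M.card := Finset.card_le_card (Finset.filter_subset _ _)
  -- the key: each e ∈ D has an incident edge in T2
  have hexists : ∀ e ∈ D, ∃ t ∈ T2, eu t = eu e ∨ ew t = ew e := by
    intro e he
    rw [hD, Finset.mem_inter, hMU, hMW, Finset.mem_filter, Finset.mem_filter] at he
    obtain ⟨⟨heM, f, hfN, hfu⟩, _, g, hgN, hgw⟩ := he
    have hfNU : f ∈ NU := Finset.mem_filter.2 ⟨hfN, e, heM, hfu.symm⟩
    have hgNW : g ∈ NW := Finset.mem_filter.2 ⟨hgN, e, heM, hgw.symm⟩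
    rcases Classical.em (f = g) with rfl | hne
    · exact ⟨f, Finset.mem_inter.2 ⟨hfNU, hgNW⟩, Or.inl hfu⟩
    · rcases Classical.em (∃ h ∈ M, ew h = ew f) with h | h
      · exact ⟨f, Finset.mem_inter.2 ⟨hfNU, Finset.mem_filter.2 ⟨hfN, h⟩⟩, Or.inl hfu⟩
      · have h' : ∀ h ∈ M, ew h ≠ ew f := by push_neg at h; exact h
        have hg := hb e heM f hfN g hgN hne hfu hgw h'
        exact ⟨g, Finset.mem_inter.2 ⟨Finset.mem_filter.2 ⟨hgN, hg⟩, hgNW⟩, Or.inr hgw⟩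
  -- D.card ≤ 2 * T2.card
  set φ : E → E := fun e =>
    if h : ∃ t ∈ T2, eu t = eu e ∨ ew t = ew e then h.choose else e with hφ
  have hφ_spec : ∀ e ∈ D, φ e ∈ T2 ∧ (eu (φ e) = eu e ∨ ew (φ e) = ew e) := by
    intro e he
    have h := hexists e he
    rw [hφ]
    simp only [dif_pos h]
    exact ⟨h.choose_spec.1, h.choose_spec.2⟩
  have himgT2 : D.image φ ⊆ T2 := by
    intro t ht
    obtain ⟨e, he, rfl⟩ := Finset.mem_image.1 ht
    exact (hφ_spec e he).1
  have hDle : D.card ≤ 2 * T2.card := by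
    have h1 : D.card = ∑ t ∈ D.image φ, (D.filter fun e => φ e = t).card :=
      Finset.card_eq_sum_card_image φ D
    have h2 : ∀ t ∈ D.image φ, (D.filter fun e => φ e = t).card ≤ 2 := by
      intro t ht
      have hsub : (D.filter fun e => φ e = t) ⊆
          (M.filter fun e => eu e = eu t) ∪ (M.filter fun e => ew e = ew t) := by
        intro e he
        rw [Finset.mem_filter] at he
        obtain ⟨heD, het⟩ := he
        have heM : e ∈ M := by
          rw [hD, Finset.mem_inter, hMU] at heD
          exact Finset.mem_of_mem_filter e heD.1
        rcases (hφ_spec e heD).2 with h | h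
        · exact Finset.mem_union_left _ (Finset.mem_filter.2 ⟨heM, by rw [het] at h; exact h.symm⟩)
        · exact Finset.mem_union_right _ (Finset.mem_filter.2 ⟨heM, by rw [het] at h; exact h.symm⟩)
      calc (D.filter fun e => φ e = t).card
          ≤ ((M.filter fun e => eu e = eu t) ∪ (M.filter fun e => ew e = ew t)).card :=
            Finset.card_le_card hsub
        _ ≤ (M.filter fun e => eu e = eu t).card + (M.filter fun e => ew e = ew t).card :=
            Finset.card_union_le _ _
        _ ≤ 1 + 1 := by
            apply Nat.add_le_add
            · apply Finset.card_le_one.2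
              intro a ha b hbm
              rw [Finset.mem_filter] at ha hbm
              by_contra hne
              exact hMu a ha.1 b hbm.1 hne (ha.2.trans hbm.2.symm)
            · apply Finset.card_le_one.2
              intro a ha b hbm
              rw [Finset.mem_filter] at ha hbm
              by_contra hne
              exact hMw a ha.1 b hbm.1 hne (ha.2.trans hbm.2.symm)
        _ = 2 := rfl
    calc D.card = ∑ t ∈ D.image φ, (D.filter fun e => φ e = t).card := h1
      _ ≤ ∑ _t ∈ D.image φ, 2 := Finset.sum_le_sum h2
      _ = 2 * (D.image φ).card := by rw [Finset.sum_const, smul_eq_mul, Nat.mul_comm]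
      _ ≤ 2 * T2.card := Nat.mul_le_mul_left 2 (Finset.card_le_card himgT2)
  -- wrap up
  have key1 : N.card + T2.card ≤ M.card + D.card := by
    rw [← hNsum, hcu, hcw]; exact hMsum
  have key2 : N.card + T2.card ≤ 2 * M.card := by
    rw [← hNsum, hcu, hcw]; omega
  omega
end

section
/- Let M_U and M_W be matroids on a common finite ground set E, and let M and N be common independent sets (i.e. sets independent in both M_U and M_W) such that |M| ≤ |N| and M is an inclusion-wise maximal common independent set (for every e ∈ E \ M, the set M ∪ {e} is dependent in M_U or dependent in M_W). Then there exist disjoint subsets N_U, N_W ⊆ N \ M such that M ∪ N_U is independent in M_U with |M ∪ N_U| = |N|, and M ∪ N_W is independent in M_W with |M ∪ N_W| = |N|. -/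
open Set

lemma aug_aux {α : Type*} (M' : Matroid α) (hfin : M'.E.Finite) :
    ∀ (n : ℕ) (I J : Set α), M'.Indep I → M'.Indep J → J.ncard - I.ncard = n →
      I.ncard ≤ J.ncard →
      ∃ K, M'.Indep K ∧ I ⊆ K ∧ K ⊆ I ∪ J ∧ K.ncard = J.ncard := by
  intro n
  induction n with
  | zero =>
    intro I J hI hJ hd hle
    exact ⟨I, hI, Subset.rfl, subset_union_left, le_antisymm hle (Nat.le_of_sub_eq_zero hd)⟩
  | succ n ih =>
    intro I J hI hJ hd hle
    have hIfin : I.Finite := hfin.subset hI.subset_ground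
    have hJfin : J.Finite := hfin.subset hJ.subset_ground
    have hlt : I.ncard < J.ncard := by omega
    have hlt' : I.encard < J.encard := by
      rwa [← hIfin.cast_ncard_eq, ← hJfin.cast_ncard_eq, Nat.cast_lt]
    obtain ⟨e, he, hIe⟩ := hI.augment hJ hlt'
    have hcard : (insert e I).ncard = I.ncard + 1 := ncard_insert_of_notMem he.2 hIfin
    obtain ⟨K, hK, hIK, hKsub, hKc⟩ := ih (insert e I) J hIe hJ (by omega) (by omega)
    refine ⟨K, hK, (subset_insert _ _).trans hIK, hKsub.trans ?_, hKc⟩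
    rw [insert_union]
    exact insert_subset (Or.inr he.1) Subset.rfl

/-- Let `M₁` (= `M_U`) and `M₂` (= `M_W`) be matroids on a common finite
ground set, and let `M`, `N` be common independent sets with `|M| ≤ |N|` and `M` an
inclusion-wise maximal common independent set. Then there are disjoint subsets
`N_U, N_W ⊆ N \ M` with `M ∪ N_U` independent in `M₁`, `M ∪ N_W` independent in `M₂`, and
`|M ∪ N_U| = |M ∪ N_W| = |N|`. -/
theorem maximal_common_independent_extension {α : Type*} (M₁ M₂ : Matroid α)
    (hE : M₁.E = M₂.E) (hfin : M₁.E.Finite)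
    (M N : Set α)
    (hM₁ : M₁.Indep M) (hM₂ : M₂.Indep M)
    (hN₁ : M₁.Indep N) (hN₂ : M₂.Indep N)
    (hcard : M.ncard ≤ N.ncard)
    (hmax : ∀ e ∈ M₁.E \ M, ¬ M₁.Indep (insert e M) ∨ ¬ M₂.Indep (insert e M)) :
    ∃ NU NW : Set α, NU ⊆ N \ M ∧ NW ⊆ N \ M ∧ Disjoint NU NW ∧
      M₁.Indep (M ∪ NU) ∧ (M ∪ NU).ncard = N.ncard ∧
      M₂.Indep (M ∪ NW) ∧ (M ∪ NW).ncard = N.ncard := by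
  obtain ⟨K₁, hK₁, hMK₁, hK₁sub, hK₁c⟩ := aug_aux M₁ hfin _ M N hM₁ hN₁ rfl hcard
  obtain ⟨K₂, hK₂, hMK₂, hK₂sub, hK₂c⟩ := aug_aux M₂ (hE ▸ hfin) _ M N hM₂ hN₂ rfl hcard
  refine ⟨K₁ \ M, K₂ \ M, ?_, ?_, ?_, ?_, ?_, ?_, ?_⟩
  · exact fun e he => ⟨(hK₁sub he.1).resolve_left he.2, he.2⟩
  · exact fun e he => ⟨(hK₂sub he.1).resolve_left he.2, he.2⟩
  · rw [Set.disjoint_left]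
    rintro e ⟨he₁, heM⟩ ⟨he₂, -⟩
    have heE : e ∈ M₁.E := hK₁.subset_ground he₁
    rcases hmax e ⟨heE, heM⟩ with h | h
    · exact h (hK₁.subset (Set.insert_subset he₁ hMK₁))
    · exact h (hK₂.subset (Set.insert_subset he₂ hMK₂))
  · rwa [Set.union_diff_cancel hMK₁]
  · rw [Set.union_diff_cancel hMK₁, hK₁c]
  · rwa [Set.union_diff_cancel hMK₂]
  · rw [Set.union_diff_cancel hMK₂, hK₂c]
end

section
/- Let G = (U, W; E) be a finite bipartite graph possibly with parallel edges, with preference functions p_v for every vertex v, a set C ⊆ U ∪ W of critical vertices, a set E_c ⊆ E of critical edges such that every critical edge is incident to at least one critical vertex, and reals 0 < γ_e^v < δ_e^v for every edge e and endpoint v of e. Then there exists a matching M in G such that (i) M is critical, (ii) no edge cγ-blocks M (so M is cγ-stable), and (iii) every cγ-stable matching N of the instance satisfies 2|N| ≤ 3|M|. -/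
open scoped Classical

/-- The preference value `p_u(M(u))` of the `M`-partner of `u ∈ U` (with `p_u(∅) = 0`). -/
noncomputable def valU {U E : Type*} (eu : E → U) (pU : E → ℝ) (M : Finset E)
    (u : U) : ℝ :=
  ∑ f ∈ M.filter (fun f => eu f = u), pU f

/-- The preference value `p_w(M(w))` of the `M`-partner of `w ∈ W` (with `p_w(∅) = 0`). -/
noncomputable def valW {W E : Type*} (ew : E → W) (pW : E → ℝ) (M : Finset E)
    (w : W) : ℝ :=
  ∑ f ∈ M.filter (fun f => ew f = w), pW f

/-- The number of critical vertices (elements of `C ⊆ U ⊕ W`) covered by the critical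
edges `M_c = M ∩ E_c` of `M`. -/
noncomputable def critCoveredC {U W E : Type*} [DecidableEq E] (eu : E → U) (ew : E → W)
    (C : Finset (U ⊕ W)) (Ec : Finset E) (M : Finset E) : ℕ :=
  (C.filter (fun v =>
    Sum.elim (fun u => ∃ e ∈ M ∩ Ec, eu e = u) (fun w => ∃ e ∈ M ∩ Ec, ew e = w) v)).card

/-- `M` is critical: there is no matching `N` such that `N_c` covers strictly more
critical vertices than `M_c`. -/
def IsCritical {U W E : Type*} [DecidableEq E] (eu : E → U) (ew : E → W)
    (C : Finset (U ⊕ W)) (Ec : Finset E) (M : Finset E) : Prop :=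
  ∀ N : Finset E, IsMatching eu ew N →
    critCoveredC eu ew C Ec N ≤ critCoveredC eu ew C Ec M

/-- `M \ {M(u), M(w)} ∪ {e}` for `e = (u, w)`. -/
noncomputable def swapIn {U W E : Type*} [DecidableEq E] (eu : E → U) (ew : E → W)
    (M : Finset E) (e : E) : Finset E :=
  insert e (M.filter (fun f => eu f ≠ eu e ∧ ew f ≠ ew e))

/-- The edge `e = (u, w) ∉ M` cγ-blocks the matching `M`. -/
noncomputable def CGBlocks {U W E : Type*} [DecidableEq E] (eu : E → U) (ew : E → W)
    (pU pW γU δU γW δW : E → ℝ) (C : Finset (U ⊕ W)) (Ec : Finset E)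
    (M : Finset E) (e : E) : Prop :=
  e ∉ M ∧ IsCritical eu ew C Ec (swapIn eu ew M e) ∧
    ((pU e - valU eu pU M (eu e) ≥ γU e ∧ pW e - valW ew pW M (ew e) ≥ δW e) ∨
     (pU e - valU eu pU M (eu e) ≥ δU e ∧ pW e - valW ew pW M (ew e) ≥ γW e))

/-!
Weight each edge `e ∈ E_c` by its number of critical endpoints (and edges off `E_c` by `0`):
the critical matchings are exactly the matchings of maximum weight. König's theorem, applied to the
critical edges at critical `U`-vertices and at critical `W`-vertices, together with the
Mendelsohn–Dulmage theorem yields an integral optimal dual `y`. By complementary slackness a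
matching is then critical iff it uses only `y`-tight edges and covers every vertex of positive `y`.

If `e` cγ-blocks such a matching `M`, the swapped matching is again critical, so `e` is tight and
the swap keeps the positive vertices covered, while both endpoints of `e` strictly improve. It
therefore suffices to find, inside the tight edges `T`, a matching covering the positive vertices
`P` that no such edge blocks (ties being broken lexicographically). By induction on `T`: if `P` is
empty this is the Gale–Shapley theorem; otherwise some edge `t` at a vertex of `P`, best there
among the edges that keep `P` covered, lies in a covering matching (found along an alternating
cycle if necessary), and no covering matching containing `t` can be blocked at `t`. So we commit to
`t` and recurse on the edges disjoint from it.

The size bound holds for a cγ-stable matching of maximum size.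
-/

open Finset Function

section

variable {U W E : Type*}

section Matching

variable {eu : E → U} {ew : E → W} {M N S T : Finset E} {e f t : E} {u : U} {w : W}
  {v : U ⊕ W} {P : Finset (U ⊕ W)}

theorem IsMatching.eq_of_eu_eq (hM : IsMatching eu ew M) (he : e ∈ M) (hf : f ∈ M)
    (h : eu e = eu f) : e = f :=
  by_contra fun hne => (hM e he f hf hne).1 h

theorem IsMatching.eq_of_ew_eq (hM : IsMatching eu ew M) (he : e ∈ M) (hf : f ∈ M)
    (h : ew e = ew f) : e = f :=
  by_contra fun hne => (hM e he f hf hne).2 h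

theorem IsMatching.mono (hM : IsMatching eu ew M) (hN : N ⊆ M) : IsMatching eu ew N :=
  fun e he f hf => hM e (hN he) f (hN hf)

theorem IsMatching.symm (hM : IsMatching eu ew M) : IsMatching ew eu M :=
  fun e he f hf hne => (hM e he f hf hne).symm

theorem IsMatching.insert [DecidableEq E] (hM : IsMatching eu ew M)
    (hu : ∀ f ∈ M, eu f ≠ eu e) (hw : ∀ f ∈ M, ew f ≠ ew e) :
    IsMatching eu ew (insert e M) := by
  intro x hx y hy hxy
  rcases mem_insert.1 hx with hxe | hxM <;> rcases mem_insert.1 hy with hye | hyM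
  · exact absurd (hxe.trans hye.symm) hxy
  · subst hxe; exact ⟨(hu y hyM).symm, (hw y hyM).symm⟩
  · subst hye; exact ⟨hu x hxM, hw x hxM⟩
  · exact hM x hxM y hyM hxy

variable (eu ew) in
noncomputable def ends (e : E) : Finset (U ⊕ W) := {Sum.inl (eu e), Sum.inr (ew e)}

variable (eu ew) in
noncomputable def covered (M : Finset E) : Finset (U ⊕ W) := M.biUnion (ends eu ew)

@[simp] theorem inl_mem_ends : Sum.inl u ∈ ends eu ew e ↔ eu e = u := by
  simp [ends, eq_comm]

@[simp] theorem inr_mem_ends : Sum.inr w ∈ ends eu ew e ↔ ew e = w := by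
  simp [ends, eq_comm]

theorem mem_covered : v ∈ covered eu ew M ↔ ∃ e ∈ M, v ∈ ends eu ew e := mem_biUnion

theorem covered_mono (h : N ⊆ M) : covered eu ew N ⊆ covered eu ew M :=
  biUnion_subset_biUnion_of_subset_left _ h

theorem covered_insert [DecidableEq E] :
    covered eu ew (insert e M) = ends eu ew e ∪ covered eu ew M := biUnion_insert

variable (eu ew) in
def IsCoveringMatching (T : Finset E) (P : Finset (U ⊕ W)) (N : Finset E) : Prop :=
  N ⊆ T ∧ IsMatching eu ew N ∧ P ⊆ covered eu ew N

theorem IsMatching.eq_of_mem_ends (hM : IsMatching eu ew M) (he : e ∈ M) (hf : f ∈ M)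
    (hve : v ∈ ends eu ew e) (hvf : v ∈ ends eu ew f) : e = f := by
  rcases v with u | w
  · exact hM.eq_of_eu_eq he hf ((inl_mem_ends.1 hve).trans (inl_mem_ends.1 hvf).symm)
  · exact hM.eq_of_ew_eq he hf ((inr_mem_ends.1 hve).trans (inr_mem_ends.1 hvf).symm)

theorem isMatching_comm : IsMatching ew eu M ↔ IsMatching eu ew M :=
  ⟨IsMatching.symm, IsMatching.symm⟩

theorem covered_comm :
    covered ew eu M = (covered eu ew M).map (Equiv.sumComm U W).toEmbedding := by
  ext v
  rcases v with w | u <;> simp [mem_covered]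

theorem isCoveringMatching_comm :
    IsCoveringMatching ew eu T (P.map (Equiv.sumComm U W).toEmbedding) N ↔
      IsCoveringMatching eu ew T P N := by
  rw [IsCoveringMatching, IsCoveringMatching, isMatching_comm (eu := eu),
    covered_comm (eu := eu), map_subset_map]

theorem IsMatching.sum_covered {R : Type*} [AddCommMonoid R] (hM : IsMatching eu ew M)
    (y : U ⊕ W → R) :
    ∑ v ∈ covered eu ew M, y v = ∑ e ∈ M, (y (Sum.inl (eu e)) + y (Sum.inr (ew e))) := by
  rw [covered, sum_biUnion]
  · exact sum_congr rfl fun e _ => sum_pair Sum.inl_ne_inr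
  · exact fun e he f hf hef =>
      disjoint_left.2 fun v hve hvf => hef (hM.eq_of_mem_ends he hf hve hvf)

section Exchange

variable [DecidableEq E]

variable (eu ew) in
noncomputable def exchange (N S : Finset E) : Finset E :=
  S ∪ N.filter fun f => ∀ s ∈ S, eu f ≠ eu s ∧ ew f ≠ ew s

theorem swapIn_eq_exchange : swapIn eu ew M e = exchange eu ew M {e} := by
  ext f
  simp [swapIn, exchange]

theorem isMatching_exchange (hN : IsMatching eu ew N) (hS : IsMatching eu ew S) :
    IsMatching eu ew (exchange eu ew N S) := by
  intro x hx y hy hxy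
  simp only [exchange, mem_union, mem_filter] at hx hy
  rcases hx with hx | ⟨hx, hxS⟩ <;> rcases hy with hy | ⟨hy, hyS⟩
  · exact hS x hx y hy hxy
  · exact ⟨(hyS x hx).1.symm, (hyS x hx).2.symm⟩
  · exact hxS y hy
  · exact hN x hx y hy hxy

theorem isMatching_swapIn (hM : IsMatching eu ew M) (e : E) :
    IsMatching eu ew (swapIn eu ew M e) := by
  rw [swapIn_eq_exchange]
  exact isMatching_exchange hM fun x hx y hy hxy =>
    absurd ((mem_singleton.1 hx).trans (mem_singleton.1 hy).symm) hxy

theorem mem_swapIn :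
    f ∈ swapIn eu ew M e ↔ f = e ∨ f ∈ M ∧ eu f ≠ eu e ∧ ew f ≠ ew e := by
  simp [swapIn]

theorem swapIn_insert (hu : eu e ≠ eu t) (hw : ew e ≠ ew t) :
    swapIn eu ew (insert t M) e = insert t (swapIn eu ew M e) := by
  rw [swapIn, swapIn, filter_insert, if_pos ⟨Ne.symm hu, Ne.symm hw⟩, insert_comm]

theorem IsMatching.not_mem_covered_swapIn (hM : IsMatching eu ew M) (ht : t ∈ M)
    (hadj : eu e = eu t ∨ ew e = ew t) (hvt : v ∈ ends eu ew t) (hve : v ∉ ends eu ew e) :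
    v ∉ covered eu ew (swapIn eu ew M e) := by
  simp only [mem_covered, mem_swapIn]
  rintro ⟨f, rfl | ⟨hf, hu, hw⟩, hvf⟩
  · exact hve hvf
  · obtain rfl := hM.eq_of_mem_ends hf ht hvf hvt
    exact hadj.elim hu.symm hw.symm

end Exchange

end Matching

section Konig

/-- The defect form of Hall's theorem. -/
theorem exists_partialTransversal_card_ge {ι α : Type*} [Fintype ι] [DecidableEq ι]
    [DecidableEq α] (t : ι → Finset α) :
    ∃ (s : Finset ι) (g : s → α), Injective g ∧ (∀ i : s, g i ∈ t i) ∧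
      ∃ S : Finset ι, #Sᶜ + #(S.biUnion t) ≤ #s := by
  obtain ⟨S, -, hS⟩ := exists_max_image univ (fun S : Finset ι => (#S : ℤ) - #(S.biUnion t))
    ⟨∅, mem_univ _⟩
  set d := #S - #(S.biUnion t)
  have hSd : #(S.biUnion t) ≤ #S := by
    have := hS ∅ (mem_univ _); simp at this; omega
  have hdef : ∀ s : Finset ι, #s ≤ #(s.biUnion t) + d := fun s => by
    have := hS s (mem_univ _); omega
  -- Hall's theorem applies once every `i` gets the same `d` extra candidates.
  obtain ⟨g, hg, hgt⟩ := (all_card_le_biUnion_card_iff_exists_injective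
    fun i => (t i).disjSum (univ : Finset (Fin d))).1 fun s => by
      rcases s.eq_empty_or_nonempty with rfl | hs
      · simp
      · have : s.biUnion (fun i => (t i).disjSum (univ : Finset (Fin d))) =
            (s.biUnion t).disjSum univ := by
          ext (x | k) <;> simp [hs.exists_mem]
        rw [this, card_disjSum, card_univ, Fintype.card_fin]
        exact hdef s
  set s := univ.filter fun i => (g i).isLeft
  have hright : #(univ.filter fun i => ¬ (g i).isLeft) ≤ d := by
    calc _ ≤ #((univ : Finset (Fin d)).map Embedding.inr) := card_le_card_of_injOn g
            (fun i hi => by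
              have : ¬ (g i).isLeft := (mem_filter.1 hi).2
              cases hgi : g i <;> simp_all) hg.injOn
      _ = d := by simp
  have hsplit : #s + #(univ.filter fun i => ¬ (g i).isLeft) = #(univ : Finset ι) :=
    card_filter_add_card_filter_not _
  have hinl : ∀ i : s, g i = Sum.inl ((g i).getLeft (mem_filter.1 i.2).2) := fun i =>
    Sum.eq_left_iff_getLeft_eq.2 ⟨_, rfl⟩
  refine ⟨s, fun i => (g i).getLeft (mem_filter.1 i.2).2,
    fun i j h => Subtype.ext (hg (by rw [hinl i, hinl j]; exact congrArg Sum.inl h)),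
    fun i => inl_mem_disjSum.1 (hinl i ▸ hgt i), S, ?_⟩
  rw [card_compl]
  rw [card_univ] at hsplit
  have := card_le_univ S
  omega

/-- König's theorem. -/
theorem exists_isMatching_card_ge_vertexCover (eu : E → U) (ew : E → W) (F : Finset E) :
    ∃ M ⊆ F, IsMatching eu ew M ∧ ∃ (X : Finset U) (Y : Finset W),
      (∀ e ∈ F, eu e ∈ X ∨ ew e ∈ Y) ∧ #X + #Y ≤ #M := by
  obtain ⟨s, g, hg, hgt, S, hS⟩ :=
    exists_partialTransversal_card_ge fun a : F.image eu => (F.filter (eu · = a)).image ew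
  have hedge : ∀ i : s, ∃ e ∈ F, eu e = i ∧ ew e = g i := fun i => by
    simpa [and_assoc] using hgt i
  choose edge hedgeF hedgeu hedgew using hedge
  have hedge_inj : Injective edge := fun i j h =>
    Subtype.ext (Subtype.ext (by rw [← hedgeu, ← hedgeu, h]))
  refine ⟨univ.image edge, image_subset_iff.2 fun i _ => hedgeF i, ?_,
    Sᶜ.map (Embedding.subtype _), S.biUnion fun a => (F.filter (eu · = a)).image ew, ?_, ?_⟩
  · simp only [IsMatching, mem_image]
    rintro _ ⟨i, -, rfl⟩ _ ⟨j, -, rfl⟩ hij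
    have hij' : i ≠ j := fun h => hij (h ▸ rfl)
    refine ⟨fun h => hij' (Subtype.ext (Subtype.ext ?_)), fun h => hij' (hg ?_)⟩
    · rwa [hedgeu, hedgeu] at h
    · rwa [hedgew, hedgew] at h
  · intro e he
    by_cases ha : (⟨eu e, mem_image_of_mem eu he⟩ : F.image eu) ∈ S
    · exact Or.inr (mem_biUnion.2 ⟨_, ha, mem_image_of_mem ew (by simpa using he)⟩)
    · exact Or.inl (mem_map.2 ⟨_, by simpa using ha, rfl⟩)
  · rwa [card_image_of_injective _ hedge_inj, card_univ, Fintype.card_coe, card_map]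

end Konig

section MendelsohnDulmage

variable [DecidableEq E] {eu : E → U} {ew : E → W} {MA MB : Finset E}

/-- The Mendelsohn–Dulmage theorem. -/
theorem exists_isMatching_covering_ends (hA : IsMatching eu ew MA) (hB : IsMatching eu ew MB) :
    ∃ M ⊆ MA ∪ MB, IsMatching eu ew M ∧ (∀ e ∈ MA, ∃ f ∈ M, eu f = eu e) ∧
      ∀ e ∈ MB, ∃ f ∈ M, ew f = ew e :=
  go MA subset_union_left hA fun e he => ⟨e, he, rfl⟩
where
  go (M : Finset E) (hMsub : M ⊆ MA ∪ MB) (hM : IsMatching eu ew M)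
      (hMA : ∀ e ∈ MA, ∃ f ∈ M, eu f = eu e) :
      ∃ M ⊆ MA ∪ MB, IsMatching eu ew M ∧ (∀ e ∈ MA, ∃ f ∈ M, eu f = eu e) ∧
        ∀ e ∈ MB, ∃ f ∈ M, ew f = ew e := by
    by_cases hdone : ∀ e ∈ MB, ∃ f ∈ M, ew f = ew e
    · exact ⟨M, hMsub, hM, hMA, hdone⟩
    push Not at hdone
    obtain ⟨e, heB, hfree⟩ := hdone
    have heM : e ∉ M := fun h => hfree e h rfl
    -- Swapping in `e ∈ MB` at a free `W`-vertex only swaps out an edge at `eu e`, not in `MB`.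
    have hdec : #(MB \ swapIn eu ew M e) < #(MB \ M) := by
      refine card_lt_card ⟨fun g hg => ?_, fun h => ?_⟩
      · simp only [mem_sdiff, mem_swapIn, not_or, not_and] at hg ⊢
        refine ⟨hg.1, fun hgM => ?_⟩
        have hu : eu g = eu e := by
          by_contra hu
          exact hg.2.2 hgM hu fun hw => hfree g hgM hw
        exact hg.2.1 (hB.eq_of_eu_eq hg.1 heB hu)
      · have := h (mem_sdiff.2 ⟨heB, heM⟩)
        simp [mem_swapIn] at this
    refine go (swapIn eu ew M e) ?_ (isMatching_swapIn hM e) ?_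
    · intro g hg
      rcases mem_swapIn.1 hg with rfl | ⟨hg, -⟩
      exacts [mem_union_right _ heB, hMsub hg]
    · intro a ha
      obtain ⟨f, hf, hfa⟩ := hMA a ha
      by_cases hfe : eu f ≠ eu e ∧ ew f ≠ ew e
      · exact ⟨f, mem_swapIn.2 (Or.inr ⟨hf, hfe⟩), hfa⟩
      · have hu : eu f = eu e := by
          by_contra hu
          exact hfe ⟨hu, fun hw => hfree f hf hw⟩
        exact ⟨e, mem_swapIn.2 (Or.inl rfl), hu ▸ hfa⟩
  termination_by #(MB \ M)

end MendelsohnDulmage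

section Duality

variable [DecidableEq E] (eu : E → U) (ew : E → W) (C : Finset (U ⊕ W)) (Ec : Finset E)
  {M : Finset E}

noncomputable def critWeight (e : E) : ℕ := if e ∈ Ec then #(C ∩ ends eu ew e) else 0

variable {eu ew C Ec}

theorem critCoveredC_eq_card :
    critCoveredC eu ew C Ec M = #(C ∩ covered eu ew (M ∩ Ec)) := by
  rw [critCoveredC, ← filter_mem_eq_inter]
  congr 1
  refine filter_congr fun v _ => ?_
  rcases v with u | w <;> simp [mem_covered]

theorem critCoveredC_eq_sum (hM : IsMatching eu ew M) :
    critCoveredC eu ew C Ec M = ∑ e ∈ M, critWeight eu ew C Ec e := by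
  rw [critCoveredC_eq_card, covered, inter_biUnion, card_biUnion, ← filter_mem_eq_inter,
    sum_filter]
  · rfl
  · intro e he f hf hef
    refine disjoint_left.2 fun v hve hvf => hef ?_
    exact hM.eq_of_mem_ends (mem_of_mem_inter_left he) (mem_of_mem_inter_left hf)
      (mem_inter.1 hve).2 (mem_inter.1 hvf).2

end Duality

section DualCover

variable [DecidableEq E] {eu : E → U} {ew : E → W}
  {C : Finset (U ⊕ W)} {Ec : Finset E} {y : U ⊕ W → ℕ} {N : Finset E}

variable (eu ew C Ec) in
def IsDualCover (y : U ⊕ W → ℕ) : Prop :=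
  ∀ e, critWeight eu ew C Ec e ≤ y (Sum.inl (eu e)) + y (Sum.inr (ew e))

theorem IsDualCover.critCoveredC_le_sum_covered (hy : IsDualCover eu ew C Ec y)
    (hN : IsMatching eu ew N) : critCoveredC eu ew C Ec N ≤ ∑ v ∈ covered eu ew N, y v := by
  rw [critCoveredC_eq_sum hN, hN.sum_covered]
  exact sum_le_sum fun e _ => hy e

variable (eu ew C Ec) in
noncomputable def tightEdges [Fintype E] (y : U ⊕ W → ℕ) : Finset E :=
  univ.filter fun e => critWeight eu ew C Ec e = y (Sum.inl (eu e)) + y (Sum.inr (ew e))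

variable [Fintype U] [Fintype W]

noncomputable def positiveVertices (y : U ⊕ W → ℕ) : Finset (U ⊕ W) :=
  univ.filter (0 < y ·)

theorem IsDualCover.critCoveredC_le (hy : IsDualCover eu ew C Ec y) (hN : IsMatching eu ew N) :
    critCoveredC eu ew C Ec N ≤ ∑ v, y v :=
  (hy.critCoveredC_le_sum_covered hN).trans (sum_le_sum_of_subset (subset_univ _))

/-- Complementary slackness. -/
theorem IsDualCover.isCoveringMatching_of_le [Fintype E] (hy : IsDualCover eu ew C Ec y)
    (hN : IsMatching eu ew N) (hle : ∑ v, y v ≤ critCoveredC eu ew C Ec N) :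
    IsCoveringMatching eu ew (tightEdges eu ew C Ec y) (positiveVertices y) N := by
  have hcov := hy.critCoveredC_le_sum_covered hN
  have hsplit := sum_sdiff (subset_univ (covered eu ew N)) (f := y)
  refine ⟨fun e he => mem_filter.2 ⟨mem_univ e, ?_⟩, hN, fun v hv => ?_⟩
  · have htight : ∑ e ∈ N, critWeight eu ew C Ec e =
        ∑ e ∈ N, (y (Sum.inl (eu e)) + y (Sum.inr (ew e))) := by
      rw [← critCoveredC_eq_sum hN, ← hN.sum_covered]
      omega
    exact (sum_eq_sum_iff_of_le fun e _ => hy e).1 htight e he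
  · by_contra hvN
    have hzero : ∑ v ∈ univ \ covered eu ew N, y v = 0 := by omega
    have := (sum_eq_zero_iff.1 hzero) v (mem_sdiff.2 ⟨mem_univ v, hvN⟩)
    exact (mem_filter.1 hv).2.ne' this

theorem IsCoveringMatching.critCoveredC_eq [Fintype E] (hN : IsCoveringMatching eu ew
    (tightEdges eu ew C Ec y) (positiveVertices y) N) :
    critCoveredC eu ew C Ec N = ∑ v, y v := by
  obtain ⟨hNT, hN, hNP⟩ := hN
  rw [critCoveredC_eq_sum hN, sum_congr rfl fun e he => (mem_filter.1 (hNT he)).2,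
    ← hN.sum_covered]
  refine sum_subset (subset_univ _) fun v _ hv => ?_
  by_contra hpos
  exact hv (hNP (mem_filter.2 ⟨mem_univ v, Nat.pos_of_ne_zero hpos⟩))

end DualCover

section StrongDuality

variable {eu : E → U} {ew : E → W} {C : Finset (U ⊕ W)} {Ec : Finset E}

theorem card_inter_ends_le (e : E) :
    #(C ∩ ends eu ew e) ≤
      (if Sum.inl (eu e) ∈ C then 1 else 0) + if Sum.inr (ew e) ∈ C then 1 else 0 := by
  rw [inter_comm, ← filter_mem_eq_inter, ends, filter_insert, filter_singleton]
  split_ifs <;> simp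

variable [DecidableEq E]

theorem isDualCover_of_covers {K K' : Finset (U ⊕ W)}
    (hK : ∀ e ∈ Ec, Sum.inl (eu e) ∈ C → Sum.inl (eu e) ∈ K ∨ Sum.inr (ew e) ∈ K)
    (hK' : ∀ e ∈ Ec, Sum.inr (ew e) ∈ C → Sum.inl (eu e) ∈ K' ∨ Sum.inr (ew e) ∈ K') :
    IsDualCover eu ew C Ec fun v => (if v ∈ K then 1 else 0) + if v ∈ K' then 1 else 0 := by
  intro e
  rw [critWeight]
  split_ifs with he
  · have h : ∀ (K : Finset (U ⊕ W)) (v : U ⊕ W), (v ∈ C → Sum.inl (eu e) ∈ K ∨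
        Sum.inr (ew e) ∈ K) → (if v ∈ C then 1 else 0) ≤
          (if Sum.inl (eu e) ∈ K then 1 else 0) + if Sum.inr (ew e) ∈ K then 1 else 0 := by
      intro K v hv
      by_cases hvC : v ∈ C
      · rw [if_pos hvC]
        rcases hv hvC with h | h <;> simp [h]
      · simp [hvC]
    have := card_inter_ends_le (eu := eu) (ew := ew) (C := C) e
    have := h K _ (hK e he)
    have := h K' _ (hK' e he)
    dsimp only
    omega
  · exact Nat.zero_le _

theorem card_add_card_le_critCoveredC {M MA MB : Finset E} (hMEc : M ⊆ Ec)
    (hMA : IsMatching eu ew MA) (hMB : IsMatching eu ew MB)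
    (hAC : ∀ e ∈ MA, Sum.inl (eu e) ∈ C) (hBC : ∀ e ∈ MB, Sum.inr (ew e) ∈ C)
    (hcovA : ∀ e ∈ MA, ∃ f ∈ M, eu f = eu e)
    (hcovB : ∀ e ∈ MB, ∃ f ∈ M, ew f = ew e) :
    #MA + #MB ≤ critCoveredC eu ew C Ec M := by
  have hsub : MA.image (Sum.inl ∘ eu) ∪ MB.image (Sum.inr ∘ ew) ⊆
      C ∩ covered eu ew (M ∩ Ec) := by
    rw [inter_eq_left.2 hMEc]
    refine union_subset (image_subset_iff.2 fun e he => ?_) (image_subset_iff.2 fun e he => ?_)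
    · obtain ⟨f, hf, hfe⟩ := hcovA e he
      exact mem_inter.2 ⟨hAC e he, mem_covered.2 ⟨f, hf, by simp [hfe]⟩⟩
    · obtain ⟨f, hf, hfe⟩ := hcovB e he
      exact mem_inter.2 ⟨hBC e he, mem_covered.2 ⟨f, hf, by simp [hfe]⟩⟩
  have hdisj : Disjoint (MA.image (Sum.inl ∘ eu)) (MB.image (Sum.inr ∘ ew)) := by
    simp [disjoint_left]
  have := card_le_card hsub
  rwa [card_union_of_disjoint hdisj,
    card_image_of_injOn (f := Sum.inl ∘ eu)
      fun e he f hf h => hMA.eq_of_eu_eq he hf (Sum.inl_injective h),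
    card_image_of_injOn (f := Sum.inr ∘ ew)
      fun e he f hf h => hMB.eq_of_ew_eq he hf (Sum.inr_injective h),
    ← critCoveredC_eq_card] at this

variable [Fintype U] [Fintype W]

theorem exists_isDualCover_le_critCoveredC (eu : E → U) (ew : E → W) (C : Finset (U ⊕ W))
    (Ec : Finset E) :
    ∃ y, IsDualCover eu ew C Ec y ∧
      ∃ M, IsMatching eu ew M ∧ ∑ v, y v ≤ critCoveredC eu ew C Ec M := by
  obtain ⟨MA, hMAF, hMA, X, Y, hXY, hcardA⟩ :=
    exists_isMatching_card_ge_vertexCover eu ew (Ec.filter fun e => Sum.inl (eu e) ∈ C)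
  obtain ⟨MB, hMBF, hMB, X', Y', hXY', hcardB⟩ :=
    exists_isMatching_card_ge_vertexCover ew eu (Ec.filter fun e => Sum.inr (ew e) ∈ C)
  obtain ⟨M, hMsub, hM, hcovA, hcovB⟩ := exists_isMatching_covering_ends hMA hMB.symm
  have hMEc : M ⊆ Ec := hMsub.trans <| union_subset
    (hMAF.trans (filter_subset _ _)) (hMBF.trans (filter_subset _ _))
  refine ⟨_, isDualCover_of_covers (K := X.disjSum Y) (K' := Y'.disjSum X')
    (fun e he hC => by simpa using hXY e (mem_filter.2 ⟨he, hC⟩))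
    (fun e he hC => by simpa [or_comm] using hXY' e (mem_filter.2 ⟨he, hC⟩)), M, hM, ?_⟩
  have := card_add_card_le_critCoveredC hMEc hMA hMB.symm
    (fun e he => (mem_filter.1 (hMAF he)).2) (fun e he => (mem_filter.1 (hMBF he)).2)
    hcovA hcovB
  simp only [sum_add_distrib, sum_boole, filter_mem_eq_inter, univ_inter, card_disjSum,
    Nat.cast_id]
  omega

end StrongDuality

section Stable

variable {α β : Type*} [LinearOrder α] [LinearOrder β] (eu : E → U) (ew : E → W)
  (kU : E → α) (kW : E → β)

def Prefers (M : Finset E) (e : E) : Prop :=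
  (∀ f ∈ M, eu f = eu e → kU f < kU e) ∧ ∀ f ∈ M, ew f = ew e → kW f < kW e

variable {eu ew kU kW} {M N T : Finset E} {e f t : E}

theorem Prefers.mono (h : Prefers eu ew kU kW M e) (hN : N ⊆ M) : Prefers eu ew kU kW N e :=
  ⟨fun f hf => h.1 f (hN hf), fun f hf => h.2 f (hN hf)⟩

theorem exists_max_on_fiber {X : Type*} (g : E → X) (k : E → α) (he : e ∈ T) :
    ∃ t ∈ T, g t = g e ∧ ∀ f ∈ T, g f = g e → k f ≤ k t := by
  obtain ⟨t, ht, hmax⟩ :=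
    exists_max_image (T.filter (g · = g e)) k ⟨e, mem_filter.2 ⟨he, rfl⟩⟩
  exact ⟨t, (mem_filter.1 ht).1, (mem_filter.1 ht).2,
    fun f hf hfe => hmax f (mem_filter.2 ⟨hf, hfe⟩)⟩

/-- The Gale–Shapley theorem. -/
theorem exists_stable_matching [DecidableEq E] (hkU : Injective kU) (hkW : Injective kW)
    (T : Finset E) :
    ∃ M ⊆ T, IsMatching eu ew M ∧ ∀ e ∈ T, e ∉ M → ¬ Prefers eu ew kU kW M e := by
  induction T using Finset.strongInduction with
  | H T ih =>
  set tops := T.filter fun e => ∀ f ∈ T, eu f = eu e → kU f ≤ kU e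
  by_cases hreject : ∃ e ∈ tops, ∃ f ∈ T, f ≠ e ∧ ew f = ew e ∧ kW f < kW e
  · -- `f` is rejected by `ew f` in favour of `e`, which is the first choice of `eu e`.
    obtain ⟨e, he, f, hfT, hfe, hw, hlt⟩ := hreject
    obtain ⟨M, hMT, hM, hstable⟩ := ih (T.erase f) (erase_ssubset hfT)
    refine ⟨M, hMT.trans (erase_subset _ _), hM, fun g hg hgM hpref => ?_⟩
    by_cases hgf : g = f
    · subst hgf
      by_cases heM : e ∈ M
      · exact (hpref.2 e heM hw.symm).not_gt hlt
      · refine hstable e (mem_erase.2 ⟨hfe.symm, (mem_filter.1 he).1⟩) heM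
          ⟨fun f' hf' hu => ?_, fun f' hf' hw' =>
            (hpref.2 f' hf' (hw'.trans hw.symm)).trans hlt⟩
        exact ((mem_filter.1 he).2 f' (mem_of_mem_erase (hMT hf')) hu).lt_of_ne
          (hkU.ne fun h => heM (h ▸ hf'))
    · exact hstable g (mem_erase.2 ⟨hgf, hg⟩) hgM hpref
  · push Not at hreject
    refine ⟨tops, filter_subset _ _, fun x hx y hy hxy => ⟨fun hu => ?_, fun hw => ?_⟩, ?_⟩
    · exact hxy (hkU (le_antisymm ((mem_filter.1 hy).2 x (mem_filter.1 hx).1 hu)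
        ((mem_filter.1 hx).2 y (mem_filter.1 hy).1 hu.symm)))
    · exact hxy (hkW (le_antisymm (hreject x hx y (mem_filter.1 hy).1 (Ne.symm hxy) hw.symm)
        (hreject y hy x (mem_filter.1 hx).1 hxy hw)))
    · intro e he heM hpref
      obtain ⟨t, htT, htu, htop⟩ := exists_max_on_fiber eu kU he
      have ht : t ∈ tops := mem_filter.2 ⟨htT, fun f hf hfu => htop f hf (hfu.trans htu)⟩
      exact (hpref.1 t ht htu).not_ge (htop e he rfl)

end Stable

theorem Function.exists_finset_nonempty_bijOn {α : Type*} [Finite α] [Nonempty α]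
    (F : α → α) :
    ∃ O : Finset α, O.Nonempty ∧ Set.BijOn F O O := by
  obtain ⟨m, n, hmn, h⟩ := Finite.exists_ne_map_eq_of_infinite
    fun n : ℕ => F^[n] (Classical.arbitrary α)
  wlog hlt : m < n generalizing m n
  · exact this n m hmn.symm h.symm (by omega)
  have hper : F^[m] (Classical.arbitrary α) ∈ periodicPts F := by
    refine mk_mem_periodicPts (n := n - m) (by omega) ?_
    rw [IsPeriodicPt, IsFixedPt, ← iterate_add_apply, Nat.sub_add_cancel hlt.le]
    exact h.symm
  refine ⟨(Set.toFinite (periodicPts F)).toFinset, ⟨_, by simpa using hper⟩, ?_⟩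
  simpa using bijOn_periodicPts F

section ExchangeSet

variable {eu : E → U} {ew : E → W} {N : Finset E} {P : Finset (U ⊕ W)}

variable (eu ew) in
def IsExchangeSet (N : Finset E) (P : Finset (U ⊕ W)) (top : U → E) (O : Finset U) : Prop :=
  (∀ u ∈ O, Sum.inl u ∈ P) ∧ Set.InjOn (fun u => ew (top u)) O ∧
    ∀ u ∈ O, ∀ f ∈ N, ew f = ew (top u) → Sum.inl (eu f) ∈ P → eu f ∈ O

/-- The map sending `u` to the `U`-end of the `N`-edge at `ew (top u)` has periodic points, and
they form an exchange set. -/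
theorem exists_isExchangeSet_of_forall [Finite U] (hN : IsMatching eu ew N) (top : U → E)
    {u₀ : U} (hu₀ : Sum.inl u₀ ∈ P)
    (hstep : ∀ u, Sum.inl u ∈ P → ∃ f ∈ N, ew f = ew (top u) ∧ Sum.inl (eu f) ∈ P) :
    ∃ O, O.Nonempty ∧ IsExchangeSet eu ew N P top O := by
  have hnext : ∀ u, ∃ u', Sum.inl u' ∈ P ∧
      (Sum.inl u ∈ P → ∃ f ∈ N, ew f = ew (top u) ∧ eu f = u') := by
    intro u
    by_cases hu : Sum.inl u ∈ P
    · obtain ⟨f, hf, hfw, hfP⟩ := hstep u hu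
      exact ⟨eu f, hfP, fun _ => ⟨f, hf, hfw, rfl⟩⟩
    · exact ⟨u₀, hu₀, fun h => absurd h hu⟩
  choose next hnextP hnext using hnext
  have : Nonempty U := ⟨u₀⟩
  obtain ⟨O, hO, hbij⟩ := exists_finset_nonempty_bijOn next
  have hOP : ∀ u ∈ O, Sum.inl u ∈ P := fun u hu => by
    obtain ⟨u', -, rfl⟩ := hbij.surjOn hu
    exact hnextP u'
  refine ⟨O, hO, hOP, fun u hu u' hu' h => hbij.injOn hu hu' ?_, fun u hu f hf hfw _ => ?_⟩
  · obtain ⟨f, hf, hfw, hfu⟩ := hnext u (hOP u hu)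
    obtain ⟨f', hf', hfw', hf'u'⟩ := hnext u' (hOP u' hu')
    rw [← hfu, ← hf'u', hN.eq_of_ew_eq hf hf' (hfw.trans (h.trans hfw'.symm))]
  · obtain ⟨f', hf', hfw', hf'u⟩ := hnext u (hOP u hu)
    rw [hN.eq_of_ew_eq hf hf' (hfw.trans hfw'.symm), hf'u]
    exact hbij.mapsTo hu

end ExchangeSet

section CoveringStable

variable [DecidableEq E] {α β : Type*} [LinearOrder α] [LinearOrder β] (eu : E → U)
  (ew : E → W) (kU : E → α) (kW : E → β)

def StrictlyBlocks (P : Finset (U ⊕ W)) (M : Finset E) (e : E) : Prop :=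
  Prefers eu ew kU kW M e ∧ P ⊆ covered eu ew (swapIn eu ew M e)

def IsStableIn (T : Finset E) (P : Finset (U ⊕ W)) (M : Finset E) : Prop :=
  IsCoveringMatching eu ew T P M ∧ ∀ e ∈ T, e ∉ M → ¬ StrictlyBlocks eu ew kU kW P M e

def IsCommittable (T : Finset E) (P : Finset (U ⊕ W)) (t : E) : Prop :=
  (∃ N, IsCoveringMatching eu ew T P N ∧ t ∈ N) ∧
    ∀ M, IsCoveringMatching eu ew T P M → t ∈ M → ∀ e ∈ T, e ∉ M →
      (eu e = eu t ∨ ew e = ew t) → ¬ StrictlyBlocks eu ew kU kW P M e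

variable {eu ew kU kW} {T N S : Finset E} {P : Finset (U ⊕ W)} {t : E}

theorem IsCommittable.exists_isStableIn (ht : IsCommittable eu ew kU kW T P t)
    (ih : ∀ T' ⊂ T, ∀ P', (∃ N, IsCoveringMatching eu ew T' P' N) →
      ∃ M, IsStableIn eu ew kU kW T' P' M) :
    ∃ M, IsStableIn eu ew kU kW T P M := by
  obtain ⟨⟨N, ⟨hNT, hN, hNP⟩, htN⟩, hshield⟩ := ht
  set T' := T.filter fun e => eu e ≠ eu t ∧ ew e ≠ ew t
  have hT' : T' ⊂ T := filter_ssubset.2 ⟨t, hNT htN, by simp⟩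
  have hN' : IsCoveringMatching eu ew T' (P \ ends eu ew t) (N.erase t) := by
    refine ⟨fun f hf => mem_filter.2 ⟨hNT (mem_of_mem_erase hf),
      hN f (mem_of_mem_erase hf) t htN (ne_of_mem_erase hf)⟩, hN.mono (erase_subset _ _), ?_⟩
    intro v hv
    obtain ⟨hvP, hvt⟩ := mem_sdiff.1 hv
    obtain ⟨f, hf, hvf⟩ := mem_covered.1 (hNP hvP)
    exact mem_covered.2 ⟨f, mem_erase.2 ⟨fun h => hvt (h ▸ hvf), hf⟩, hvf⟩
  obtain ⟨M, ⟨hMT', hM, hMP⟩, hMstable⟩ := ih T' hT' _ ⟨_, hN'⟩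
  have hMt : ∀ f ∈ M, eu f ≠ eu t ∧ ew f ≠ ew t := fun f hf => (mem_filter.1 (hMT' hf)).2
  have hcov : IsCoveringMatching eu ew T P (insert t M) := by
    refine ⟨insert_subset (hNT htN) (hMT'.trans (filter_subset _ _)),
      hM.insert (fun f hf => (hMt f hf).1) (fun f hf => (hMt f hf).2), ?_⟩
    rw [covered_insert]
    exact sdiff_le_iff.1 hMP
  refine ⟨insert t M, hcov, fun e heT he hblock => ?_⟩
  by_cases hadj : eu e = eu t ∨ ew e = ew t
  · exact hshield _ hcov (mem_insert_self _ _) e heT he hadj hblock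
  · push Not at hadj
    refine hMstable e (mem_filter.2 ⟨heT, hadj⟩) (fun h => he (mem_insert_of_mem h))
      ⟨hblock.1.mono (subset_insert _ _), ?_⟩
    have := hblock.2
    rw [swapIn_insert hadj.1 hadj.2, covered_insert] at this
    exact sdiff_le_iff.2 this


theorem isCoveringMatching_exchange (hN : IsCoveringMatching eu ew T P N) (hST : S ⊆ T)
    (hS : IsMatching eu ew S)
    (hcov : ∀ f ∈ N, ∀ s ∈ S, (eu f = eu s ∨ ew f = ew s) →
      ∀ v ∈ ends eu ew f, v ∈ P → v ∈ covered eu ew S) :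
    IsCoveringMatching eu ew T P (exchange eu ew N S) := by
  refine ⟨union_subset hST ((filter_subset _ _).trans hN.1), isMatching_exchange hN.2.1 hS,
    fun v hv => ?_⟩
  obtain ⟨f, hf, hvf⟩ := mem_covered.1 (hN.2.2 hv)
  by_cases hfS : ∀ s ∈ S, eu f ≠ eu s ∧ ew f ≠ ew s
  · exact mem_covered.2 ⟨f, mem_union_right _ (mem_filter.2 ⟨hf, hfS⟩), hvf⟩
  · push Not at hfS
    obtain ⟨s, hs, hadj⟩ := hfS
    exact covered_mono subset_union_left
      (hcov f hf s hs (or_iff_not_imp_left.2 hadj) v hvf hv)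

theorem isCommittable_of_anchor (hN : IsCoveringMatching eu ew T P N) (htN : t ∈ N)
    (hP : Sum.inl (eu t) ∈ P)
    (hanchor : ∀ e ∈ T, eu e = eu t → kU t < kU e →
      ew e ≠ ew t ∧ Sum.inr (ew t) ∈ P) :
    IsCommittable eu ew kU kW T P t := by
  refine ⟨⟨N, hN, htN⟩, fun M hM htM e heT _ hadj hblock => ?_⟩
  by_cases hu : eu e = eu t
  · obtain ⟨hw, hwP⟩ := hanchor e heT hu (hblock.1.1 t htM hu.symm)
    exact hM.2.1.not_mem_covered_swapIn htM hadj (inr_mem_ends.2 rfl)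
      (fun h => hw (inr_mem_ends.1 h)) (hblock.2 hwP)
  · exact hM.2.1.not_mem_covered_swapIn htM hadj (inl_mem_ends.2 rfl)
      (fun h => hu (inl_mem_ends.1 h)) (hblock.2 hP)

theorem exists_isCommittable_of_ends_mem (hN : IsCoveringMatching eu ew T P N) {n : E}
    (hn : n ∈ N) (hu : Sum.inl (eu n) ∈ P) (hw : Sum.inr (ew n) ∈ P) :
    ∃ t, IsCommittable eu ew kU kW T P t := by
  obtain ⟨t, htT, htn, htop⟩ := exists_max_on_fiber (fun e => (eu e, ew e)) kU (hN.1 hn)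
  obtain ⟨htu, htw⟩ := Prod.mk.inj htn
  have hN' : IsCoveringMatching eu ew T P (exchange eu ew N {t}) := by
    refine isCoveringMatching_exchange hN (singleton_subset_iff.2 htT) (by simp [IsMatching]) ?_
    rintro f hf s hs hadj v hvf -
    obtain rfl := mem_singleton.1 hs
    have hfn : f = n := by
      rcases hadj with h | h
      exacts [hN.2.1.eq_of_eu_eq hf hn (h.trans htu), hN.2.1.eq_of_ew_eq hf hn (h.trans htw)]
    subst hfn
    exact mem_covered.2 ⟨s, mem_singleton_self _, by simpa [ends, htu, htw] using hvf⟩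
  refine ⟨t, isCommittable_of_anchor hN' (mem_union_left _ (mem_singleton_self t)) (htu ▸ hu)
    fun e he heu hlt => ⟨fun hew => ?_, htw ▸ hw⟩⟩
  exact hlt.not_ge (htop e he (by simp [heu, hew, htu, htw]))


theorem isCoveringMatching_exchange_image (hN : IsCoveringMatching eu ew T P N)
    (hnp : ∀ f ∈ N, Sum.inl (eu f) ∈ P → Sum.inr (ew f) ∉ P)
    {top : U → E} {O : Finset U}
    (htop : ∀ u ∈ O, top u ∈ T ∧ eu (top u) = u) (hO : IsExchangeSet eu ew N P top O) :
    IsCoveringMatching eu ew T P (exchange eu ew N (O.image top)) := by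
  obtain ⟨hOP, hinj, hclosed⟩ := hO
  refine isCoveringMatching_exchange hN (image_subset_iff.2 fun u hu => (htop u hu).1) ?_ ?_
  · simp only [IsMatching, mem_image]
    rintro _ ⟨u, hu, rfl⟩ _ ⟨u', hu', rfl⟩ hne
    have huu' : u ≠ u' := fun h => hne (h ▸ rfl)
    exact ⟨by rw [(htop u hu).2, (htop u' hu').2]; exact huu', fun h => huu' (hinj hu hu' h)⟩
  · simp only [mem_image]
    rintro f hf _ ⟨u, hu, rfl⟩ hadj (v | w) hvf hvP
    · rw [inl_mem_ends] at hvf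
      subst hvf
      have hfO : eu f ∈ O := by
        rcases hadj with h | h
        · exact h ▸ (htop u hu).2.symm ▸ hu
        · exact hclosed u hu f hf h hvP
      exact mem_covered.2 ⟨top (eu f), mem_image_of_mem _ hfO, by simp [(htop _ hfO).2]⟩
    · rw [inr_mem_ends] at hvf
      subst hvf
      rcases hadj with h | h
      · exact absurd hvP (hnp f hf (h ▸ (htop u hu).2.symm ▸ hOP u hu))
      · exact mem_covered.2 ⟨top u, mem_image_of_mem _ hu, by simp [h]⟩


theorem exists_isCommittable_of_inl_mem [Finite U] (hN : IsCoveringMatching eu ew T P N) {u₀ : U}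
    (hu₀ : Sum.inl u₀ ∈ P) : ∃ t, IsCommittable eu ew kU kW T P t := by
  by_cases hpar : ∃ n ∈ N, Sum.inl (eu n) ∈ P ∧ Sum.inr (ew n) ∈ P
  · obtain ⟨n, hn, hu, hw⟩ := hpar
    exact exists_isCommittable_of_ends_mem hN hn hu hw
  push Not at hpar
  have hcovU : ∀ u, Sum.inl u ∈ P → ∃ f ∈ N, eu f = u := fun u hu => by
    simpa [mem_covered] using hN.2.2 hu
  obtain ⟨f₀, -⟩ := hcovU u₀ hu₀
  have htop : ∀ u, ∃ t, Sum.inl u ∈ P →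
      t ∈ T ∧ eu t = u ∧ ∀ e ∈ T, eu e = u → kU e ≤ kU t := by
    intro u
    by_cases hu : Sum.inl u ∈ P
    · obtain ⟨f, hf, rfl⟩ := hcovU u hu
      obtain ⟨t, htT, htu, hmax⟩ := exists_max_on_fiber eu kU (hN.1 hf)
      exact ⟨t, fun _ => ⟨htT, htu, hmax⟩⟩
    · exact ⟨f₀, fun h => absurd h hu⟩
  choose top htop using htop
  suffices ∃ O, O.Nonempty ∧ IsExchangeSet eu ew N P top O by
    obtain ⟨O, ⟨u, hu⟩, hO⟩ := this
    have hN' := isCoveringMatching_exchange_image hN hpar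
      (fun u hu => ⟨(htop u (hO.1 u hu)).1, (htop u (hO.1 u hu)).2.1⟩) hO
    obtain ⟨-, htu, hmax⟩ := htop u (hO.1 u hu)
    exact ⟨top u, isCommittable_of_anchor hN' (mem_union_left _ (mem_image_of_mem top hu))
      (by rw [htu]; exact hO.1 u hu) fun e he heu hlt => absurd (hmax e he (heu.trans htu))
        hlt.not_ge⟩
  by_cases hstep :
      ∃ u, Sum.inl u ∈ P ∧ ∀ f ∈ N, ew f = ew (top u) → Sum.inl (eu f) ∉ P
  · obtain ⟨u, hu, hstep⟩ := hstep
    refine ⟨{u}, singleton_nonempty u, by simpa using hu, by simp, ?_⟩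
    simp only [mem_singleton]
    rintro _ rfl f hf hfw hfP
    exact absurd hfP (hstep f hf hfw)
  · push Not at hstep
    exact exists_isExchangeSet_of_forall hN.2.1 top hu₀ hstep

section Symmetry

variable {M : Finset E} {e : E}

theorem swapIn_comm : swapIn ew eu M e = swapIn eu ew M e := by
  simp only [swapIn, and_comm]

theorem strictlyBlocks_comm :
    StrictlyBlocks ew eu kW kU (P.map (Equiv.sumComm U W).toEmbedding) M e ↔
      StrictlyBlocks eu ew kU kW P M e := by
  rw [StrictlyBlocks, StrictlyBlocks, Prefers, Prefers, swapIn_comm (eu := eu),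
    covered_comm (eu := eu), map_subset_map,
    and_comm (a := ∀ f ∈ M, ew f = ew e → kW f < kW e)]

theorem isCommittable_comm :
    IsCommittable ew eu kW kU T (P.map (Equiv.sumComm U W).toEmbedding) t ↔
      IsCommittable eu ew kU kW T P t := by
  simp only [IsCommittable, isCoveringMatching_comm, strictlyBlocks_comm, or_comm]

end Symmetry

theorem exists_isCommittable [Finite U] [Finite W] (hN : IsCoveringMatching eu ew T P N)
    (hP : P.Nonempty) : ∃ t, IsCommittable eu ew kU kW T P t := by
  obtain ⟨u | w, hv⟩ := hP
  · exact exists_isCommittable_of_inl_mem hN hv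
  · obtain ⟨t, ht⟩ := exists_isCommittable_of_inl_mem (kU := kW) (kW := kU)
      (isCoveringMatching_comm.2 hN) (u₀ := w) (by simpa using hv)
    exact ⟨t, isCommittable_comm.1 ht⟩

theorem exists_isStableIn [Finite U] [Finite W] (hkU : Injective kU) (hkW : Injective kW)
    (T : Finset E) (P : Finset (U ⊕ W)) (hN : ∃ N, IsCoveringMatching eu ew T P N) :
    ∃ M, IsStableIn eu ew kU kW T P M := by
  induction T using Finset.strongInduction generalizing P with
  | H T ih =>
  obtain ⟨N, hN⟩ := hN
  rcases P.eq_empty_or_nonempty with rfl | hP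
  · obtain ⟨M, hMT, hM, hstable⟩ := exists_stable_matching (eu := eu) (ew := ew) hkU hkW T
    exact ⟨M, ⟨hMT, hM, empty_subset _⟩, fun e he heM hblock => hstable e he heM hblock.1⟩
  · obtain ⟨t, ht⟩ := exists_isCommittable (kU := kU) (kW := kW) hN hP
    exact ht.exists_isStableIn fun T' hT' P' hN' => ih T' hT' P' hN'

end CoveringStable

section Preferences

variable [Fintype E]

noncomputable def lexKey (p : E → ℝ) (e : E) : ℝ ×ₗ Fin (Fintype.card E) :=
  toLex (p e, Fintype.equivFin E e)

theorem lexKey_injective (p : E → ℝ) : Injective (lexKey p) := fun _ _ h =>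
  (Fintype.equivFin E).injective (Prod.ext_iff.1 (toLex.injective h)).2

theorem lexKey_lt_lexKey {p : E → ℝ} {e f : E} (h : p e < p f) : lexKey p e < lexKey p f :=
  Prod.Lex.lt_iff.2 (Or.inl h)

end Preferences

section CGamma

variable {eu : E → U} {ew : E → W} {pU pW : E → ℝ} {M : Finset E} {f : E}

theorem IsMatching.valU_eq (hM : IsMatching eu ew M) (hf : f ∈ M) :
    valU eu pU M (eu f) = pU f :=
  sum_eq_single_of_mem f (mem_filter.2 ⟨hf, rfl⟩) fun _ hg hgf =>
    absurd (hM.eq_of_eu_eq (mem_filter.1 hg).1 hf (mem_filter.1 hg).2) hgf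

theorem IsMatching.valW_eq (hM : IsMatching eu ew M) (hf : f ∈ M) :
    valW ew pW M (ew f) = pW f :=
  sum_eq_single_of_mem f (mem_filter.2 ⟨hf, rfl⟩) fun _ hg hgf =>
    absurd (hM.eq_of_ew_eq (mem_filter.1 hg).1 hf (mem_filter.1 hg).2) hgf

variable [DecidableEq E] [Fintype E] {C : Finset (U ⊕ W)} {Ec : Finset E}
  {γU δU γW δW : E → ℝ} {e : E}

theorem CGBlocks.prefers (hM : IsMatching eu ew M)
    (hγU : ∀ e, 0 < γU e) (hγδU : ∀ e, γU e < δU e)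
    (hγW : ∀ e, 0 < γW e) (hγδW : ∀ e, γW e < δW e)
    (h : CGBlocks eu ew pU pW γU δU γW δW C Ec M e) :
    Prefers eu ew (lexKey pU) (lexKey pW) M e := by
  obtain ⟨-, -, himp⟩ := h
  have hU : valU eu pU M (eu e) < pU e := by
    rcases himp with ⟨h, -⟩ | ⟨h, -⟩ <;> linarith [hγU e, hγδU e]
  have hW : valW ew pW M (ew e) < pW e := by
    rcases himp with ⟨-, h⟩ | ⟨-, h⟩ <;> linarith [hγW e, hγδW e]
  refine ⟨fun f hf hfe => lexKey_lt_lexKey ?_, fun f hf hfe => lexKey_lt_lexKey ?_⟩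
  · rwa [← hM.valU_eq (pU := pU) hf, hfe]
  · rwa [← hM.valW_eq (pW := pW) hf, hfe]

end CGamma

theorem exists_isCritical_not_cgBlocks [DecidableEq E] [Fintype U] [Fintype W] [Fintype E]
    (eu : E → U) (ew : E → W) (pU pW : E → ℝ) (C : Finset (U ⊕ W)) (Ec : Finset E)
    {γU δU γW δW : E → ℝ} (hγU : ∀ e, 0 < γU e) (hγδU : ∀ e, γU e < δU e)
    (hγW : ∀ e, 0 < γW e) (hγδW : ∀ e, γW e < δW e) :
    ∃ M, IsMatching eu ew M ∧ IsCritical eu ew C Ec M ∧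
      ∀ e, ¬ CGBlocks eu ew pU pW γU δU γW δW C Ec M e := by
  obtain ⟨y, hy, M₀, hM₀, hM₀y⟩ := exists_isDualCover_le_critCoveredC eu ew C Ec
  obtain ⟨M, hM, hstable⟩ := exists_isStableIn (lexKey_injective pU) (lexKey_injective pW)
    (tightEdges eu ew C Ec y) (positiveVertices y)
    ⟨M₀, hy.isCoveringMatching_of_le hM₀ hM₀y⟩
  have hMy := hM.critCoveredC_eq
  refine ⟨M, hM.2.1, fun N hN => hMy ▸ hy.critCoveredC_le hN, fun e hblock => ?_⟩
  have hswap := hy.isCoveringMatching_of_le (isMatching_swapIn hM.2.1 e)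
    (hMy ▸ hblock.2.1 M hM.2.1)
  exact hstable e (hswap.1 (mem_swapIn.2 (Or.inl rfl))) hblock.1
    ⟨hblock.prefers hM.2.1 hγU hγδU hγW hγδW, hswap.2.2⟩

end

theorem exists_cgamma_stable_three_halves_critical_edges_general {U W E : Type*} [Fintype U]
    [Fintype W] [Fintype E] [DecidableEq E]
    (eu : E → U) (ew : E → W) (pU pW : E → ℝ)
    (C : Finset (U ⊕ W)) (Ec : Finset E)
    (γU δU γW δW : E → ℝ)
    (hγU : ∀ e, 0 < γU e) (hγδU : ∀ e, γU e < δU e)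
    (hγW : ∀ e, 0 < γW e) (hγδW : ∀ e, γW e < δW e) :
    ∃ M : Finset E, IsMatching eu ew M ∧ IsCritical eu ew C Ec M ∧
      (∀ e, ¬ CGBlocks eu ew pU pW γU δU γW δW C Ec M e) ∧
      (∀ N : Finset E, IsMatching eu ew N → IsCritical eu ew C Ec N →
        (∀ e, ¬ CGBlocks eu ew pU pW γU δU γW δW C Ec N e) →
        2 * N.card ≤ 3 * M.card) := by
  obtain ⟨M, hM, hmax⟩ := exists_max_image
    (univ.filter fun M => IsMatching eu ew M ∧ IsCritical eu ew C Ec M ∧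
      ∀ e, ¬ CGBlocks eu ew pU pW γU δU γW δW C Ec M e) card
    (by
      obtain ⟨M₀, hM₀⟩ :=
        exists_isCritical_not_cgBlocks eu ew pU pW C Ec hγU hγδU hγW hγδW
      exact ⟨M₀, mem_filter.2 ⟨mem_univ M₀, hM₀⟩⟩)
  obtain ⟨hMm, hMc, hMb⟩ := (mem_filter.1 hM).2
  refine ⟨M, hMm, hMc, hMb, fun N hN hNc hNb => ?_⟩
  have := hmax N (mem_filter.2 ⟨mem_univ N, hN, hNc, hNb⟩)
  omega

/-- For every finite bipartite multigraph with preference functions,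
critical vertices `C`, critical edges `E_c` (each incident to a critical vertex) and
reals `0 < γ_e^v < δ_e^v`, there is a cγ-stable matching `M` (critical and with no
cγ-blocking edge) such that every cγ-stable matching `N` satisfies `2|N| ≤ 3|M|`. -/
theorem exists_cgamma_stable_three_halves_critical_edges {U W E : Type*} [Fintype U]
    [Fintype W] [Fintype E] [DecidableEq E]
    (eu : E → U) (ew : E → W) (pU pW : E → ℝ)
    (hpU : ∀ e, 0 ≤ pU e) (hpW : ∀ e, 0 ≤ pW e)
    (C : Finset (U ⊕ W)) (Ec : Finset E)
    (hEc : ∀ e ∈ Ec, Sum.inl (eu e) ∈ C ∨ Sum.inr (ew e) ∈ C)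
    (γU δU γW δW : E → ℝ)
    (hγU : ∀ e, 0 < γU e) (hγδU : ∀ e, γU e < δU e)
    (hγW : ∀ e, 0 < γW e) (hγδW : ∀ e, γW e < δW e) :
    ∃ M : Finset E, IsMatching eu ew M ∧ IsCritical eu ew C Ec M ∧
      (∀ e, ¬ CGBlocks eu ew pU pW γU δU γW δW C Ec M e) ∧
      (∀ N : Finset E, IsMatching eu ew N → IsCritical eu ew C Ec N →
        (∀ e, ¬ CGBlocks eu ew pU pW γU δU γW δW C Ec N e) →
        2 * N.card ≤ 3 * M.card) :=
  exists_cgamma_stable_three_halves_critical_edges_general eu ew pU pW C Ec γU δU γW δW hγU hγδU hγW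
    hγδW
end

section
/- Let G = (U, W; E) be a finite bipartite graph possibly with parallel edges, with preference functions p_v for every vertex v, and reals γ_e^u > 0 and γ_e^w > 0 for every edge e = (u, w). Then there exists a γ-min stable matching M such that every γ-min stable matching N satisfies 2|N| ≤ 3|M|. -/
open scoped Classical

/-- `M` is a γ-min stable matching: there is no edge `e = (u, w) ∉ M` with
`p_u(e) − p_u(M(u)) ≥ γ_e^u` and `p_w(e) − p_w(M(w)) ≥ γ_e^w`. -/
noncomputable def GammaMinStable {U W E : Type*} (eu : E → U) (ew : E → W)
    (pU pW γU γW : E → ℝ) (M : Finset E) : Prop :=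
  IsMatching eu ew M ∧ ∀ e, e ∉ M →
    ¬ (pU e - valU eu pU M (eu e) ≥ γU e ∧ pW e - valW ew pW M (ew e) ≥ γW e)

/-- Gale–Shapley-style deletion argument: for strict "key" preferences there is a matching
`M ⊆ s` such that every edge of `s` outside `M` is dominated at one of its endpoints by a
strictly better matched edge. -/
lemma exists_classically_stable {U W E K : Type*} [DecidableEq E] [LinearOrder K]
    (eu : E → U) (ew : E → W) (kU kW : E → K)
    (hkU : Function.Injective kU) (hkW : Function.Injective kW)
    (s : Finset E) :
    ∃ M ⊆ s, IsMatching eu ew M ∧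
      ∀ e ∈ s, e ∉ M →
        (∃ f ∈ M, eu f = eu e ∧ kU e < kU f) ∨ (∃ f ∈ M, ew f = ew e ∧ kW e < kW f) := by
  induction s using Finset.strongInduction with
  | _ s ih =>
    by_cases hc : ∃ e ∈ s, (∀ g ∈ s, eu g = eu e → kU g ≤ kU e) ∧
        ∃ f ∈ s, (∀ g ∈ s, eu g = eu f → kU g ≤ kU f) ∧ ew f = ew e ∧ kW e < kW f
    · obtain ⟨e, he, _hetop, f, hf, hftop, hwf, hlt⟩ := hc
      obtain ⟨M, hMsub, hMmatch, hMcov⟩ := ih (s.erase e) (Finset.erase_ssubset he)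
      refine ⟨M, hMsub.trans (Finset.erase_subset _ _), hMmatch, ?_⟩
      intro g hg hgM
      by_cases hge : g = e
      · subst hge
        have hfe : f ≠ g := fun h => absurd hlt (by rw [h]; exact lt_irrefl _)
        by_cases hfM : f ∈ M
        · exact Or.inr ⟨f, hfM, hwf, hlt⟩
        · have hf' : f ∈ s.erase g := Finset.mem_erase.mpr ⟨hfe, hf⟩
          rcases hMcov f hf' hfM with ⟨g', hg'M, hgu, hglt⟩ | ⟨g', hg'M, hgw, hglt⟩
          · exact absurd (hftop g' (Finset.mem_of_mem_erase (hMsub hg'M)) hgu)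
              (not_le.mpr hglt)
          · exact Or.inr ⟨g', hg'M, hgw.trans hwf, hlt.trans hglt⟩
      · exact hMcov g (Finset.mem_erase.mpr ⟨hge, hg⟩) hgM
    · push_neg at hc
      set T := s.filter (fun e => ∀ g ∈ s, eu g = eu e → kU g ≤ kU e) with hT
      have hTs : T ⊆ s := Finset.filter_subset _ _
      have hTmem : ∀ e, e ∈ T ↔ e ∈ s ∧ ∀ g ∈ s, eu g = eu e → kU g ≤ kU e := by
        intro e; simp [hT]
      refine ⟨T, hTs, ?_, ?_⟩
      · intro e heT f hfT hef
        have he := (hTmem e).mp heT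
        have hf := (hTmem f).mp hfT
        constructor
        · intro h
          have h1 : kU e ≤ kU f := hf.2 e he.1 h
          have h2 : kU f ≤ kU e := he.2 f hf.1 h.symm
          exact hef (hkU (le_antisymm h1 h2))
        · intro h
          rcases lt_or_gt_of_ne (fun hk => hef (hkW hk) : kW e ≠ kW f) with hlt | hlt
          · exact absurd hlt (not_lt.mpr (hc e he.1 he.2 f hf.1 hf.2 h.symm))
          · exact absurd hlt (not_lt.mpr (hc f hf.1 hf.2 e he.1 he.2 h))
      · intro e he heT
        obtain ⟨b, hb, hbmax⟩ := Finset.exists_max_image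
          (s.filter (fun g => eu g = eu e)) kU
          ⟨e, Finset.mem_filter.mpr ⟨he, rfl⟩⟩
        rw [Finset.mem_filter] at hb
        have hbT : b ∈ T := (hTmem b).mpr ⟨hb.1, fun g hg hgb => by
          exact hbmax g (Finset.mem_filter.mpr ⟨hg, hgb.trans hb.2⟩)⟩
        have hbe : b ≠ e := fun h => heT (h ▸ hbT)
        have hle : kU e ≤ kU b :=
          hbmax e (Finset.mem_filter.mpr ⟨he, rfl⟩)
        exact Or.inl ⟨b, hbT, hb.2, lt_of_le_of_ne hle (fun h => hbe (hkU h.symm))⟩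

/-- For every finite bipartite multigraph with preference functions and
reals `γ_e^u, γ_e^w > 0`, there is a γ-min stable matching `M` such that every γ-min
stable matching `N` satisfies `2|N| ≤ 3|M|`. -/
theorem exists_gamma_min_stable_three_halves {U W E : Type*} [Fintype U] [Fintype W]
    [Fintype E] [DecidableEq E]
    (eu : E → U) (ew : E → W) (pU pW : E → ℝ)
    (hpU : ∀ e, 0 ≤ pU e) (hpW : ∀ e, 0 ≤ pW e)
    (γU γW : E → ℝ) (hγU : ∀ e, 0 < γU e) (hγW : ∀ e, 0 < γW e) :
    ∃ M : Finset E, GammaMinStable eu ew pU pW γU γW M ∧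
      ∀ N : Finset E, GammaMinStable eu ew pU pW γU γW N →
        2 * N.card ≤ 3 * M.card := by
  classical
  -- tie-breaking keys
  let ι : E → ℕ := fun e => (Fintype.equivFin E e : ℕ)
  have hι : Function.Injective ι := fun a b h => by
    have := Fin.val_injective h
    exact (Fintype.equivFin E).injective this
  let kU : E → ℝ ×ₗ ℕ := fun e => toLex (pU e, ι e)
  let kW : E → ℝ ×ₗ ℕ := fun e => toLex (pW e, ι e)
  have hkU : Function.Injective kU := by
    intro a b h
    have h' : (pU a, ι a) = (pU b, ι b) := toLex.injective h
    exact hι (congrArg Prod.snd h')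
  have hkW : Function.Injective kW := by
    intro a b h
    have h' : (pW a, ι a) = (pW b, ι b) := toLex.injective h
    exact hι (congrArg Prod.snd h')
  obtain ⟨M, -, hMmatch, hMcov⟩ :=
    exists_classically_stable eu ew kU kW hkU hkW (Finset.univ : Finset E)
  -- M is γ-min stable
  have hMstable : GammaMinStable eu ew pU pW γU γW M := by
    refine ⟨hMmatch, ?_⟩
    intro e heM ⟨h1, h2⟩
    rcases hMcov e (Finset.mem_univ e) heM with ⟨f, hfM, hfu, hflt⟩ | ⟨f, hfM, hfw, hflt⟩
    · -- the value of `u` in `M` is `pU f`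
      have hval : valU eu pU M (eu e) = pU f := by
        have : M.filter (fun g => eu g = eu e) = {f} := by
          apply Finset.eq_singleton_iff_unique_mem.mpr
          refine ⟨Finset.mem_filter.mpr ⟨hfM, hfu⟩, ?_⟩
          intro g hg
          rw [Finset.mem_filter] at hg
          by_contra hgf
          exact (hMmatch g hg.1 f hfM hgf).1 (hg.2.trans hfu.symm)
        rw [valU, this, Finset.sum_singleton]
      rw [hval] at h1
      have hlt : pU f < pU e := by linarith [hγU e]
      have : kU f < kU e := by
        rw [show kU f = toLex (pU f, ι f) from rfl, show kU e = toLex (pU e, ι e) from rfl,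
          Prod.Lex.lt_iff]
        exact Or.inl hlt
      exact absurd hflt (not_lt.mpr this.le)
    · have hval : valW ew pW M (ew e) = pW f := by
        have : M.filter (fun g => ew g = ew e) = {f} := by
          apply Finset.eq_singleton_iff_unique_mem.mpr
          refine ⟨Finset.mem_filter.mpr ⟨hfM, hfw⟩, ?_⟩
          intro g hg
          rw [Finset.mem_filter] at hg
          by_contra hgf
          exact (hMmatch g hg.1 f hfM hgf).2 (hg.2.trans hfw.symm)
        rw [valW, this, Finset.sum_singleton]
      rw [hval] at h2
      have hlt : pW f < pW e := by linarith [hγW e]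
      have : kW f < kW e := by
        rw [show kW f = toLex (pW f, ι f) from rfl, show kW e = toLex (pW e, ι e) from rfl,
          Prod.Lex.lt_iff]
        exact Or.inl hlt
      exact absurd hflt (not_lt.mpr this.le)
  -- take a γ-min stable matching of maximum cardinality
  set S : Finset (Finset E) :=
    Finset.univ.filter (fun M => GammaMinStable eu ew pU pW γU γW M) with hS
  have hSne : S.Nonempty := ⟨M, by simp [hS, hMstable]⟩
  obtain ⟨M0, hM0S, hM0max⟩ := Finset.exists_max_image S Finset.card hSne
  have hM0 : GammaMinStable eu ew pU pW γU γW M0 := by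
    have := Finset.mem_filter.mp (hS ▸ hM0S)
    exact this.2
  refine ⟨M0, hM0, ?_⟩
  intro N hN
  have hNle : N.card ≤ M0.card := hM0max N (by simp [hS, hN])
  omega
end
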